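/- For every horizon T ≥ 1 there exists a pure Bob strategy S_B (a function assigning a choice b_t ∈ {L,R} to each prefix (a_1,…,a_t; b_1,…,b_{t−1}), depending on v_B and T) such that for every cut sequence a_1,…,a_T ∈ [0,1] (equivalently, against every Alice strategy), the resulting trajectory satisfies Σ_{t=1}^T u_A^t ≤ T/2 + (Δ/(2δ) + 2)·√T and Σ_{t=1}^T u_B^t ≥ T/2 − √T. -/

import Mathlib

open MeasureTheory

/-- Bob's choice of the left or right piece. -/
inductive Choice
  | L
  | R
deriving DecidableEq

instance : Fintype Choice :=
  ⟨{Choice.L, Choice.R}, fun x => by cases x <;> simp⟩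

/-- The cumulative valuation `V(x) = ∫_0^x v`. -/
noncomputable def cumul (v : ℝ → ℝ) (x : ℝ) : ℝ := ∫ y in (0:ℝ)..x, v y

/-- `v` is an integrable value density on `[0,1]`, bounded between `lo` and `hi`,
integrating to `1`. -/
def IsDensity (lo hi : ℝ) (v : ℝ → ℝ) : Prop :=
  IntervalIntegrable v volume 0 1 ∧
  (∀ x ∈ Set.Icc (0:ℝ) 1, lo ≤ v x ∧ v x ≤ hi) ∧
  (∫ y in (0:ℝ)..1, v y) = 1

/-- Alice's round-`t` utility: if Bob picks `L` she gets `[a_t,1]`, else `[0,a_t]`. -/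
noncomputable def uA (vA : ℝ → ℝ) (a : ℕ → ℝ) (b : ℕ → Choice) (t : ℕ) : ℝ :=
  if b t = Choice.L then 1 - cumul vA (a t) else cumul vA (a t)

/-- Bob's round-`t` utility: if he picks `L` he gets `[0,a_t]`, else `[a_t,1]`. -/
noncomputable def uB (vB : ℝ → ℝ) (a : ℕ → ℝ) (b : ℕ → Choice) (t : ℕ) : ℝ :=
  if b t = Choice.L then cumul vB (a t) else 1 - cumul vB (a t)

/-- A pure Alice strategy: given the history `(a_1,…,a_t; b_1,…,b_t)`, produce the
next cut `a_{t+1}`. -/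
def AliceStrategy : Type := ∀ t : ℕ, (Fin t → ℝ) → (Fin t → Choice) → ℝ

/-- A pure (sequential) Bob strategy: given `(a_1,…,a_{t+1}; b_1,…,b_t)`, produce the
next choice `b_{t+1}`. -/
def BobStrategy : Type := ∀ t : ℕ, (Fin (t+1) → ℝ) → (Fin t → Choice) → Choice

/-- The trajectory `(a,b)` is consistent with Alice's strategy `S` over horizon `T`. -/
def AliceConsistent (S : AliceStrategy) (a : ℕ → ℝ) (b : ℕ → Choice) (T : ℕ) : Prop :=
  ∀ t : ℕ, t < T → a (t+1) = S t (fun i => a (i.1+1)) (fun i => b (i.1+1))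

/-- The trajectory `(a,b)` is consistent with Bob's strategy `S` over horizon `T`. -/
def BobConsistent (S : BobStrategy) (a : ℕ → ℝ) (b : ℕ → Choice) (T : ℕ) : Prop :=
  ∀ t : ℕ, t < T → b (t+1) = S t (fun i => a (i.1+1)) (fun i => b (i.1+1))

/-- Alice's Stackelberg value `u_A^* = max(V_A(m_B), 1 - V_A(m_B))`. -/
noncomputable def stackValue (vA : ℝ → ℝ) (mB : ℝ) : ℝ :=
  max (cumul vA mB) (1 - cumul vA mB)

/-!
Bob sorts the cuts into `K = ⌈√T⌉` classes according to which interval `[j/K, (j+1)/K)`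
contains `V_B(a_t)`, and within each class he answers `R, L, R, L, …`. Consecutive rounds of a
class pair up: Bob's two pieces are worth at least `1 - 1/K` to him, and since
`|V_A x - V_A y| ≤ (Δ/δ)·|V_B x - V_B y|`, Alice's two pieces are worth at most `1 + Δ/(δK)` to
her. There are at most `T/2` pairs and at most `K` unpaired rounds, and `T/K + K ≤ 2√T + 1`.
-/

open Finset

noncomputable def altSum {α : Type*} [LinearOrder α] (S : Finset α) (f : α → ℝ) : ℝ :=
  ∑ t ∈ S, if Even #{u ∈ S | u < t} then f t else 1 - f t

section altSum

variable {α : Type*} [LinearOrder α]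

theorem altSum_insert_of_forall_lt {S : Finset α} {m : α} (hm : ∀ t ∈ S, m < t) (f : α → ℝ) :
    altSum (insert m S) f = f m + altSum S (1 - f) := by
  have hmS : m ∉ S := fun h => lt_irrefl m (hm m h)
  have hbelow : ∀ t ∈ S, {u ∈ insert m S | u < t} = insert m {u ∈ S | u < t} := fun t ht => by
    rw [filter_insert, if_pos (hm t ht)]
  have hmin : {u ∈ insert m S | u < m} = ∅ := filter_eq_empty_iff.2 fun u hu =>
    not_lt.2 ((mem_insert.1 hu).elim ge_of_eq fun h => (hm u h).le)
  rw [altSum, sum_insert hmS, hmin, card_empty, if_pos (by decide), altSum]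
  congr 1
  refine sum_congr rfl fun t ht => ?_
  rw [hbelow t ht, card_insert_of_notMem (fun h => hmS (mem_filter.1 h).1)]
  by_cases h : Even #{u ∈ S | u < t} <;> simp [h, Nat.even_add_one]

theorem altSum_eq_min'_add {S : Finset α} (hS : S.Nonempty) (f : α → ℝ) :
    altSum S f = f (S.min' hS) + altSum (S.erase (S.min' hS)) (1 - f) := by
  conv_lhs => rw [← insert_erase (S.min'_mem hS)]
  exact altSum_insert_of_forall_lt (fun t ht => S.min'_lt_of_mem_erase_min' hS ht) f

theorem altSum_add_altSum_one_sub (S : Finset α) (f : α → ℝ) :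
    altSum S f + altSum S (1 - f) = #S := by
  rw [altSum, altSum, ← sum_add_distrib, card_eq_sum_ones, Nat.cast_sum]
  refine sum_congr rfl fun t _ => ?_
  split_ifs <;> simp

theorem altSum_le {S : Finset α} {f : α → ℝ} {e : ℝ} (hf : ∀ t ∈ S, f t ≤ 1)
    (he : ∀ s ∈ S, ∀ t ∈ S, f s - f t ≤ e) :
    altSum S f ≤ (#S / 2 : ℕ) * (1 + e) + (#S % 2 : ℕ) := by
  generalize hn : #S = n
  induction n using Nat.twoStepInduction generalizing S with
  | zero => simp [card_eq_zero.1 hn, altSum]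
  | one =>
    obtain ⟨m, rfl⟩ := card_eq_one.1 hn
    simpa [altSum, filter_singleton] using hf m (mem_singleton_self m)
  | more n ih _ =>
    have hS : S.Nonempty := card_pos.1 (by omega)
    set m := S.min' hS
    have hS' : (S.erase m).Nonempty :=
      card_pos.1 (by rw [card_erase_of_mem (S.min'_mem hS)]; omega)
    set m' := (S.erase m).min' hS'
    have hm' : m' ∈ S := mem_of_mem_erase ((S.erase m).min'_mem hS')
    have hR : ∀ t ∈ (S.erase m).erase m', t ∈ S :=
      fun t ht => mem_of_mem_erase (mem_of_mem_erase ht)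
    have hcard : #((S.erase m).erase m') = n := by
      rw [card_erase_of_mem ((S.erase m).min'_mem hS'), card_erase_of_mem (S.min'_mem hS)]
      omega
    have hrest :=
      ih (fun t ht => hf t (hR t ht)) (fun s hs t ht => he s (hR s hs) t (hR t ht)) hcard
    have hpair := he m (S.min'_mem hS) m' hm'
    rw [altSum_eq_min'_add hS, altSum_eq_min'_add hS', sub_sub_cancel]
    simp only [Pi.sub_apply, Pi.one_apply]
    rw [show (n + 2) / 2 = n / 2 + 1 by omega, show (n + 2) % 2 = n % 2 by omega]
    push_cast
    linarith

theorem le_altSum {S : Finset α} {f : α → ℝ} {e : ℝ} (hf : ∀ t ∈ S, 0 ≤ f t)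
    (he : ∀ s ∈ S, ∀ t ∈ S, f s - f t ≤ e) :
    (#S / 2 : ℕ) * (1 - e) ≤ altSum S f := by
  have hcompl := altSum_le (f := 1 - f) (e := e) (fun t ht => by simp [hf t ht])
    (fun s hs t ht => by simpa using he t ht s hs)
  have hsplit : ((#S : ℕ) : ℝ) = 2 * (#S / 2 : ℕ) + (#S % 2 : ℕ) := by
    exact_mod_cast (Nat.div_add_mod #S 2).symm
  linarith [altSum_add_altSum_one_sub S f]

theorem altSum_le_card_mul_add {S : Finset α} {f : α → ℝ} {e : ℝ} (hf : ∀ t ∈ S, f t ≤ 1)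
    (he : ∀ s ∈ S, ∀ t ∈ S, f s - f t ≤ e) :
    altSum S f ≤ #S * ((1 + e) / 2) + 1 / 2 := by
  obtain rfl | ⟨s, hs⟩ := S.eq_empty_or_nonempty
  · simp [altSum]
  have he0 : 0 ≤ e := by simpa using he s hs s hs
  have hsplit : ((#S : ℕ) : ℝ) = 2 * (#S / 2 : ℕ) + (#S % 2 : ℕ) := by
    exact_mod_cast (Nat.div_add_mod #S 2).symm
  have hmod : ((#S % 2 : ℕ) : ℝ) ≤ 1 := by exact_mod_cast Nat.le_of_lt_succ (Nat.mod_lt _ two_pos)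
  nlinarith [altSum_le hf he, (Nat.cast_nonneg (#S % 2) : (0 : ℝ) ≤ _)]

theorem card_sub_one_mul_le_altSum {S : Finset α} {f : α → ℝ} {e : ℝ} (hf : ∀ t ∈ S, 0 ≤ f t)
    (he : ∀ s ∈ S, ∀ t ∈ S, f s - f t ≤ e) (he1 : e ≤ 1) :
    (#S - 1) * ((1 - e) / 2) ≤ altSum S f := by
  have hsplit : ((#S : ℕ) : ℝ) = 2 * (#S / 2 : ℕ) + (#S % 2 : ℕ) := by
    exact_mod_cast (Nat.div_add_mod #S 2).symm
  have hmod : ((#S % 2 : ℕ) : ℝ) ≤ 1 := by exact_mod_cast Nat.le_of_lt_succ (Nat.mod_lt _ two_pos)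
  nlinarith [le_altSum hf he]

end altSum

noncomputable def bucket (K : ℕ) (x : ℝ) : ℕ := min ⌊K * x⌋₊ (K - 1)

theorem bucket_lt {K : ℕ} (hK : 0 < K) (x : ℝ) : bucket K x < K :=
  (min_le_right _ _).trans_lt (Nat.sub_lt hK one_pos)

theorem bucket_le_mul (K : ℕ) {x : ℝ} (hx : 0 ≤ x) : (bucket K x : ℝ) ≤ K * x :=
  (Nat.cast_le.2 (min_le_left _ _)).trans (Nat.floor_le (by positivity))

theorem mul_le_bucket_add_one {K : ℕ} (hK : 0 < K) {x : ℝ} (hx : x ≤ 1) :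
    K * x ≤ bucket K x + 1 := by
  rcases le_total ⌊(K : ℝ) * x⌋₊ (K - 1) with h | h
  · rw [bucket, min_eq_left h]
    exact (Nat.lt_floor_add_one _).le
  · rw [bucket, min_eq_right h, Nat.cast_sub hK, Nat.cast_one, sub_add_cancel]
    exact mul_le_of_le_one_right (Nat.cast_nonneg K) hx

theorem abs_sub_le_of_bucket_eq {K : ℕ} (hK : 0 < K) {x y : ℝ} (hx : x ∈ Set.Icc (0 : ℝ) 1)
    (hy : y ∈ Set.Icc (0 : ℝ) 1) (h : bucket K x = bucket K y) : |x - y| ≤ 1 / K := by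
  have hK' : (0 : ℝ) < K := Nat.cast_pos.2 hK
  have hxu := mul_le_bucket_add_one hK hx.2
  have hyu := mul_le_bucket_add_one hK hy.2
  have hxl := bucket_le_mul K hx.1
  have hyl := bucket_le_mul K hy.1
  rw [h] at hxu hxl
  rw [abs_sub_le_iff, le_div_iff₀ hK', le_div_iff₀ hK']
  constructor <;> linarith

namespace IsDensity

variable {lo hi : ℝ} {v : ℝ → ℝ} {x y : ℝ}

theorem intervalIntegrable (hv : IsDensity lo hi v) (hx : x ∈ Set.Icc (0 : ℝ) 1)
    (hy : y ∈ Set.Icc (0 : ℝ) 1) : IntervalIntegrable v volume x y :=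
  hv.1.mono_set (Set.uIcc_subset_uIcc (by simpa [Set.uIcc_of_le zero_le_one] using hx)
    (by simpa [Set.uIcc_of_le zero_le_one] using hy))

theorem cumul_sub_cumul (hv : IsDensity lo hi v) (hx : x ∈ Set.Icc (0 : ℝ) 1)
    (hy : y ∈ Set.Icc (0 : ℝ) 1) : cumul v y - cumul v x = ∫ s in x..y, v s :=
  intervalIntegral.integral_interval_sub_left (hv.intervalIntegrable (by simp) hy)
    (hv.intervalIntegrable (by simp) hx)

theorem mul_sub_le_cumul_sub (hv : IsDensity lo hi v) (hx : x ∈ Set.Icc (0 : ℝ) 1)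
    (hy : y ∈ Set.Icc (0 : ℝ) 1) (hxy : x ≤ y) : lo * (y - x) ≤ cumul v y - cumul v x := by
  rw [hv.cumul_sub_cumul hx hy, mul_comm, ← smul_eq_mul, ← intervalIntegral.integral_const]
  exact intervalIntegral.integral_mono_on hxy intervalIntegrable_const
    (hv.intervalIntegrable hx hy) fun s hs => (hv.2.1 s ⟨hx.1.trans hs.1, hs.2.trans hy.2⟩).1

theorem cumul_sub_le_mul_sub (hv : IsDensity lo hi v) (hx : x ∈ Set.Icc (0 : ℝ) 1)
    (hy : y ∈ Set.Icc (0 : ℝ) 1) (hxy : x ≤ y) : cumul v y - cumul v x ≤ hi * (y - x) := by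
  rw [hv.cumul_sub_cumul hx hy, mul_comm, ← smul_eq_mul, ← intervalIntegral.integral_const]
  exact intervalIntegral.integral_mono_on hxy (hv.intervalIntegrable hx hy)
    intervalIntegrable_const fun s hs => (hv.2.1 s ⟨hx.1.trans hs.1, hs.2.trans hy.2⟩).2

theorem lo_le_hi (hv : IsDensity lo hi v) : lo ≤ hi :=
  (hv.2.1 0 (by simp)).1.trans (hv.2.1 0 (by simp)).2

theorem cumul_mem_Icc (hv : IsDensity lo hi v) (hlo : 0 ≤ lo) (hx : x ∈ Set.Icc (0 : ℝ) 1) :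
    cumul v x ∈ Set.Icc (0 : ℝ) 1 := by
  have h0 : cumul v 0 = 0 := intervalIntegral.integral_same
  have h1 : cumul v 1 = 1 := hv.2.2
  have hleft := hv.mul_sub_le_cumul_sub (by simp) hx hx.1
  have hright := hv.mul_sub_le_cumul_sub hx (by simp) hx.2
  constructor <;> nlinarith [hx.1, hx.2]

theorem mul_abs_sub_le_abs_cumul_sub (hv : IsDensity lo hi v) (hx : x ∈ Set.Icc (0 : ℝ) 1)
    (hy : y ∈ Set.Icc (0 : ℝ) 1) : lo * |x - y| ≤ |cumul v x - cumul v y| := by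
  rcases le_total x y with hxy | hyx
  · rw [abs_sub_comm x, abs_sub_comm (cumul v x), abs_of_nonneg (sub_nonneg.2 hxy)]
    exact (hv.mul_sub_le_cumul_sub hx hy hxy).trans (le_abs_self _)
  · rw [abs_of_nonneg (sub_nonneg.2 hyx)]
    exact (hv.mul_sub_le_cumul_sub hy hx hyx).trans (le_abs_self _)

theorem abs_cumul_sub_le (hv : IsDensity lo hi v) (hlo : 0 ≤ lo) (hx : x ∈ Set.Icc (0 : ℝ) 1)
    (hy : y ∈ Set.Icc (0 : ℝ) 1) : |cumul v x - cumul v y| ≤ hi * |x - y| := by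
  rcases le_total x y with hxy | hyx
  · have := hv.mul_sub_le_cumul_sub hx hy hxy
    rw [abs_sub_comm x, abs_sub_comm (cumul v x), abs_of_nonneg (sub_nonneg.2 hxy),
      abs_of_nonneg (by nlinarith)]
    exact hv.cumul_sub_le_mul_sub hx hy hxy
  · have := hv.mul_sub_le_cumul_sub hy hx hyx
    rw [abs_of_nonneg (sub_nonneg.2 hyx), abs_of_nonneg (by nlinarith)]
    exact hv.cumul_sub_le_mul_sub hy hx hyx

theorem abs_cumul_sub_le_div_mul {lo' hi' : ℝ} {w : ℝ → ℝ} (hv : IsDensity lo hi v)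
    (hw : IsDensity lo' hi' w) (hlo : 0 ≤ lo) (hlo' : 0 < lo') (hx : x ∈ Set.Icc (0 : ℝ) 1)
    (hy : y ∈ Set.Icc (0 : ℝ) 1) :
    |cumul v x - cumul v y| ≤ hi / lo' * |cumul w x - cumul w y| := by
  have hhi : 0 ≤ hi := hlo.trans hv.lo_le_hi
  calc |cumul v x - cumul v y| ≤ hi * |x - y| := hv.abs_cumul_sub_le hlo hx hy
    _ = hi / lo' * (lo' * |x - y|) := by field_simp
    _ ≤ hi / lo' * |cumul w x - cumul w y| :=
      mul_le_mul_of_nonneg_left (hw.mul_abs_sub_le_abs_cumul_sub hx hy) (by positivity)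

end IsDensity

theorem sum_le_of_forall_sum_fiber_le {ι : Type*} (I : Finset ι) (key : ι → ℕ) {K : ℕ}
    (hkey : ∀ i ∈ I, key i < K) (u : ι → ℝ) {c d : ℝ}
    (h : ∀ k < K, ∑ i ∈ I with key i = k, u i ≤ #{i ∈ I | key i = k} * c + d) :
    ∑ i ∈ I, u i ≤ #I * c + K * d := by
  have hmaps : ∀ i ∈ I, key i ∈ range K := fun i hi => mem_range.2 (hkey i hi)
  calc ∑ i ∈ I, u i = ∑ k ∈ range K, ∑ i ∈ I with key i = k, u i :=
        (sum_fiberwise_of_maps_to hmaps u).symm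
    _ ≤ ∑ k ∈ range K, (#{i ∈ I | key i = k} * c + d) :=
        sum_le_sum fun k hk => h k (mem_range.1 hk)
    _ = #I * c + K * d := by
        rw [sum_add_distrib, ← sum_mul, ← Nat.cast_sum, ← card_eq_sum_card_fiberwise hmaps,
          sum_const, card_range, nsmul_eq_mul]

theorem le_sum_of_forall_le_sum_fiber {ι : Type*} (I : Finset ι) (key : ι → ℕ) {K : ℕ}
    (hkey : ∀ i ∈ I, key i < K) (u : ι → ℝ) {c d : ℝ}
    (h : ∀ k < K, #{i ∈ I | key i = k} * c - d ≤ ∑ i ∈ I with key i = k, u i) :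
    #I * c - K * d ≤ ∑ i ∈ I, u i := by
  have := sum_le_of_forall_sum_fiber_le I key hkey (-u) (c := -c) (d := d) fun k hk => by
    simp only [Pi.neg_apply, sum_neg_distrib]
    linarith [h k hk]
  simp only [Pi.neg_apply, sum_neg_distrib] at this
  linarith

def alternatingBob (key : ℝ → ℕ) : BobStrategy := fun t a _ =>
  if Even #{i : Fin t | key (a i.castSucc) = key (a (Fin.last t))} then Choice.R else Choice.L

theorem card_filter_fin_eq_card_filter_Icc (p : ℕ → Prop) [DecidablePred p] (n : ℕ) :
    #{i : Fin n | p (i + 1)} = #{u ∈ Icc 1 n | p u} := by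
  refine card_bij (fun i _ => i.1 + 1) (fun i hi => ?_) (fun i _ j _ h => ?_) (fun u hu => ?_)
  · simp only [mem_filter, mem_univ, true_and] at hi
    simp only [mem_filter, mem_Icc]
    exact ⟨⟨by omega, i.2⟩, hi⟩
  · exact Fin.ext (by omega)
  · simp only [mem_filter, mem_Icc] at hu
    exact ⟨⟨u - 1, by omega⟩, by simpa [Nat.sub_add_cancel hu.1.1] using hu.2,
      Nat.sub_add_cancel hu.1.1⟩

theorem BobConsistent.alternatingBob_choice {key : ℝ → ℕ} {a : ℕ → ℝ} {b : ℕ → Choice} {T t : ℕ}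
    (hb : BobConsistent (alternatingBob key) a b T) (ht : t ∈ Icc 1 T) :
    b t = if Even #{u ∈ {s ∈ Icc 1 T | key (a s) = key (a t)} | u < t}
      then Choice.R else Choice.L := by
  obtain ⟨ht1, htT⟩ := mem_Icc.1 ht
  obtain ⟨n, rfl⟩ : ∃ n, t = n + 1 := ⟨t - 1, by omega⟩
  have hpred : {u ∈ {s ∈ Icc 1 T | key (a s) = key (a (n + 1))} | u < n + 1}
      = {u ∈ Icc 1 n | key (a u) = key (a (n + 1))} := by
    ext u
    simp only [mem_filter, mem_Icc]
    omega
  rw [hb n (by omega), alternatingBob, hpred, ← card_filter_fin_eq_card_filter_Icc]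
  simp only [Fin.val_castSucc, Fin.val_last]

theorem div_natCeil_sqrt_le (n : ℕ) : (n : ℝ) / ⌈√(n : ℝ)⌉₊ ≤ √(n : ℝ) := by
  rcases Nat.eq_zero_or_pos n with rfl | hn
  · simp
  have hK : (0 : ℝ) < ⌈√(n : ℝ)⌉₊ := by positivity
  rw [div_le_iff₀ hK]
  calc (n : ℝ) = √n * √n := (Real.mul_self_sqrt n.cast_nonneg).symm
    _ ≤ √n * ⌈√(n : ℝ)⌉₊ := mul_le_mul_of_nonneg_left (Nat.le_ceil _) (Real.sqrt_nonneg _)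

section Fibers

variable {δ Δ : ℝ} {vA vB : ℝ → ℝ} {K T : ℕ} {a : ℕ → ℝ} {b : ℕ → Choice}

theorem BobConsistent.sum_fiber_eq_altSum {key : ℝ → ℕ}
    (hb : BobConsistent (alternatingBob key) a b T) {g u : ℕ → ℝ}
    (hu : ∀ t, u t = if b t = Choice.R then g t else 1 - g t) (k : ℕ) :
    ∑ t ∈ Icc 1 T with key (a t) = k, u t = altSum {t ∈ Icc 1 T | key (a t) = k} g := by
  refine sum_congr rfl fun t ht => ?_
  obtain ⟨htI, rfl⟩ := mem_filter.1 ht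
  rw [hu, hb.alternatingBob_choice htI]
  split_ifs <;> simp_all

theorem uA_eq (vA : ℝ → ℝ) (a : ℕ → ℝ) (b : ℕ → Choice) (t : ℕ) :
    uA vA a b t = if b t = Choice.R then cumul vA (a t) else 1 - cumul vA (a t) := by
  rcases h : b t <;> simp [uA, h]

theorem uB_eq (vB : ℝ → ℝ) (a : ℕ → ℝ) (b : ℕ → Choice) (t : ℕ) :
    uB vB a b t = if b t = Choice.R then 1 - cumul vB (a t) else 1 - (1 - cumul vB (a t)) := by
  rcases h : b t <;> simp [uB, h]

theorem abs_cumul_sub_le_of_mem_fiber (hδ : 0 ≤ δ) (hB : IsDensity δ Δ vB) (hK : 0 < K)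
    (ha : ∀ t ∈ Icc 1 T, a t ∈ Set.Icc (0 : ℝ) 1) {k s t : ℕ}
    (hs : s ∈ {t ∈ Icc 1 T | bucket K (cumul vB (a t)) = k})
    (ht : t ∈ {t ∈ Icc 1 T | bucket K (cumul vB (a t)) = k}) :
    |cumul vB (a s) - cumul vB (a t)| ≤ 1 / K := by
  obtain ⟨hsI, hsk⟩ := mem_filter.1 hs
  obtain ⟨htI, htk⟩ := mem_filter.1 ht
  exact abs_sub_le_of_bucket_eq hK (hB.cumul_mem_Icc hδ (ha s hsI))
    (hB.cumul_mem_Icc hδ (ha t htI)) (hsk.trans htk.symm)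

theorem sum_uA_fiber_le (hδ : 0 < δ) (hA : IsDensity δ Δ vA) (hB : IsDensity δ Δ vB)
    (hK : 0 < K) (ha : ∀ t ∈ Icc 1 T, a t ∈ Set.Icc (0 : ℝ) 1)
    (hb : BobConsistent (alternatingBob fun x => bucket K (cumul vB x)) a b T) (k : ℕ) :
    ∑ t ∈ Icc 1 T with bucket K (cumul vB (a t)) = k, uA vA a b t
      ≤ #{t ∈ Icc 1 T | bucket K (cumul vB (a t)) = k} * ((1 + Δ / δ / K) / 2) + 1 / 2 := by
  rw [hb.sum_fiber_eq_altSum (uA_eq vA a b) k]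
  refine altSum_le_card_mul_add (fun t ht => (hA.cumul_mem_Icc hδ.le (ha t (mem_filter.1 ht).1)).2)
    fun s hs t ht => ?_
  have hsI := (mem_filter.1 hs).1
  have htI := (mem_filter.1 ht).1
  calc cumul vA (a s) - cumul vA (a t) ≤ |cumul vA (a s) - cumul vA (a t)| := le_abs_self _
    _ ≤ Δ / δ * |cumul vB (a s) - cumul vB (a t)| :=
        hA.abs_cumul_sub_le_div_mul hB hδ.le hδ (ha s hsI) (ha t htI)
    _ ≤ Δ / δ * (1 / K) := by
        gcongr
        · exact div_nonneg (hδ.le.trans hA.lo_le_hi) hδ.le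
        · exact abs_cumul_sub_le_of_mem_fiber hδ.le hB hK ha hs ht
    _ = Δ / δ / K := by ring

theorem le_sum_uB_fiber (hδ : 0 ≤ δ) (hB : IsDensity δ Δ vB) (hK : 0 < K)
    (ha : ∀ t ∈ Icc 1 T, a t ∈ Set.Icc (0 : ℝ) 1)
    (hb : BobConsistent (alternatingBob fun x => bucket K (cumul vB x)) a b T) (k : ℕ) :
    #{t ∈ Icc 1 T | bucket K (cumul vB (a t)) = k} * ((1 - 1 / K) / 2) - (1 - 1 / K) / 2
      ≤ ∑ t ∈ Icc 1 T with bucket K (cumul vB (a t)) = k, uB vB a b t := by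
  rw [hb.sum_fiber_eq_altSum (uB_eq vB a b) k]
  have hK1 : (1 : ℝ) / K ≤ 1 := div_le_one_of_le₀ (Nat.one_le_cast.2 hK) (Nat.cast_nonneg K)
  have hpairs := card_sub_one_mul_le_altSum (S := {t ∈ Icc 1 T | bucket K (cumul vB (a t)) = k})
    (f := fun t => 1 - cumul vB (a t))
    (fun t ht => sub_nonneg.2 (hB.cumul_mem_Icc hδ (ha t (mem_filter.1 ht).1)).2)
    (fun s hs t ht => by
      linarith [le_abs_self (cumul vB (a t) - cumul vB (a s)),
        abs_cumul_sub_le_of_mem_fiber hδ hB hK ha ht hs])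
    hK1
  linarith

end Fibers

theorem bob_enforces_equitable_payoffs_general
    (δ Δ : ℝ) (hδ : 0 < δ)
    (vA vB : ℝ → ℝ) (hA : IsDensity δ Δ vA) (hB : IsDensity δ Δ vB)
    (T : ℕ) (hT : 1 ≤ T) :
    ∃ SB : BobStrategy,
      ∀ (a : ℕ → ℝ), (∀ t : ℕ, 1 ≤ t → t ≤ T → a t ∈ Set.Icc (0:ℝ) 1) →
      ∀ b : ℕ → Choice, BobConsistent SB a b T →
        (∑ t ∈ Finset.Icc 1 T, uA vA a b t ≤
            (T : ℝ) / 2 + (Δ / (2 * δ) + 2) * Real.sqrt T) ∧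
        ((T : ℝ) / 2 - Real.sqrt T ≤ ∑ t ∈ Finset.Icc 1 T, uB vB a b t) := by
  set K := ⌈√(T : ℝ)⌉₊
  have hs : 1 ≤ √(T : ℝ) := Real.one_le_sqrt.2 (Nat.one_le_cast.2 hT)
  have hK : 0 < K := Nat.ceil_pos.2 (by linarith)
  have hTK : (T : ℝ) / K ≤ √(T : ℝ) := div_natCeil_sqrt_le T
  have hKs : (K : ℝ) < √(T : ℝ) + 1 := Nat.ceil_lt_add_one (Real.sqrt_nonneg _)
  have hΔδ : 0 ≤ Δ / δ := div_nonneg (hδ.le.trans hA.lo_le_hi) hδ.le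
  refine ⟨alternatingBob fun x => bucket K (cumul vB x), fun a ha b hb => ?_⟩
  have ha' : ∀ t ∈ Icc 1 T, a t ∈ Set.Icc (0 : ℝ) 1 :=
    fun t ht => ha t (mem_Icc.1 ht).1 (mem_Icc.1 ht).2
  have hkey : ∀ t ∈ Icc 1 T, bucket K (cumul vB (a t)) < K := fun t _ => bucket_lt hK _
  have hAlice := sum_le_of_forall_sum_fiber_le _ _ hkey _ fun k _ =>
    sum_uA_fiber_le hδ hA hB hK ha' hb k
  have hBob := le_sum_of_forall_le_sum_fiber _ _ hkey _ fun k _ =>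
    le_sum_uB_fiber hδ.le hB hK ha' hb k
  rw [Nat.card_Icc, Nat.add_sub_cancel] at hAlice hBob
  constructor
  · calc _ ≤ (T : ℝ) * ((1 + Δ / δ / K) / 2) + K * (1 / 2) := hAlice
      _ = T / 2 + Δ / δ * (T / K) / 2 + K / 2 := by ring
      _ ≤ _ := by
        rw [show Δ / (2 * δ) = Δ / δ / 2 by ring]
        nlinarith [mul_le_mul_of_nonneg_left hTK hΔδ]
  · calc (T : ℝ) / 2 - √(T : ℝ) ≤ T / 2 - T / K / 2 - K / 2 + 1 / 2 := by linarith
      _ = T * ((1 - 1 / K) / 2) - K * ((1 - 1 / K) / 2) := by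
        field_simp
        ring
      _ ≤ _ := hBob

/-- In the sequential setting, Bob has a pure strategy guaranteeing, against
every cut sequence in `[0,1]`, that Alice's total payoff is at most
`T/2 + (Δ/(2δ)+2)·√T` and Bob's total payoff is at least `T/2 − √T`. -/
theorem bob_enforces_equitable_payoffs
    (δ Δ : ℝ) (hδ : 0 < δ) (hδΔ : δ ≤ Δ)
    (vA vB : ℝ → ℝ) (hA : IsDensity δ Δ vA) (hB : IsDensity δ Δ vB)
    (T : ℕ) (hT : 1 ≤ T) :
    ∃ SB : BobStrategy,
      ∀ (a : ℕ → ℝ), (∀ t : ℕ, 1 ≤ t → t ≤ T → a t ∈ Set.Icc (0:ℝ) 1) →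
      ∀ b : ℕ → Choice, BobConsistent SB a b T →
        (∑ t ∈ Finset.Icc 1 T, uA vA a b t ≤
            (T : ℝ) / 2 + (Δ / (2 * δ) + 2) * Real.sqrt T) ∧
        ((T : ℝ) / 2 - Real.sqrt T ≤ ∑ t ∈ Finset.Icc 1 T, uB vB a b t) :=
  bob_enforces_equitable_payoffs_general δ Δ hδ vA vB hA hB T hT
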